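/- arXiv:1811.02409 — 2 statements merged into one kernel-verified Lean document; each statement's English description precedes it below -/
import Mathlib

section
/- Let n ≥ 1, let k ≤ -2 be a real number, and let N be a natural number. Suppose a : ℝⁿ × ℝⁿ × ℝ → ℂ, (x,ξ,η) ↦ a(x,ξ,η), is continuous, has continuous partial derivatives ∂_x^γ ∂_ξ^β a of all orders |γ| + |β| ≤ N, and there are constants C_{γ,β} such that |∂_x^γ ∂_ξ^β a(x,ξ,η)| ≤ C_{γ,β} (1 + |ξ|² + η²)^{(k-|β|)/2} for all (x,ξ,η) and all |γ| + |β| ≤ N. Then for every (x,ξ) the integral α(x,ξ) := ∫_ℝ a(x,ξ,η) dη converges absolutely, the function α has continuous partial derivatives ∂_x^γ ∂_ξ^β α of all orders |γ| + |β| ≤ N obtained by differentiating under the integral sign, and there are constants C'_{γ,β}, depending only on n, k and the C_{γ,β}, such that |∂_x^γ ∂_ξ^β α(x,ξ)| ≤ C'_{γ,β} (1 + |ξ|²)^{(k+1-|β|)/2} for all (x,ξ) and all |γ| + |β| ≤ N. (This is the key step of the paper's Lemma on restriction of pseudodifferential operators: integrating a symbol of order k over the normal transform variable yields a symbol of order k+1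 on the boundary.) -/
open MeasureTheory Real Complex

/-- Directional derivative (junk value `0` where the function is not differentiable). -/
noncomputable def dirDeriv {F : Type*} [NormedAddCommGroup F] [NormedSpace ℝ F]
    (v : F) (f : F → ℂ) : F → ℂ := fun p => fderiv ℝ f p v

/-- The mixed multi-index partial derivative `∂_x^γ ∂_ξ^β` on functions of
`(x, ξ) ∈ ℝⁿ × ℝⁿ`. -/
noncomputable def pdXXi {n : ℕ} (γ β : Fin n → ℕ)
    (f : EuclideanSpace ℝ (Fin n) × EuclideanSpace ℝ (Fin n) → ℂ) :
    EuclideanSpace ℝ (Fin n) × EuclideanSpace ℝ (Fin n) → ℂ :=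
  (List.finRange n).foldr
    (fun i g =>
      (dirDeriv ((EuclideanSpace.single i 1 : EuclideanSpace ℝ (Fin n)),
        (0 : EuclideanSpace ℝ (Fin n))))^[γ i] g)
    ((List.finRange n).foldr
      (fun i g =>
        (dirDeriv ((0 : EuclideanSpace ℝ (Fin n)),
          (EuclideanSpace.single i 1 : EuclideanSpace ℝ (Fin n))))^[β i] g) f)

/-! ### Auxiliary machinery: iterated directional derivatives along lists -/

section chain
variable {F : Type*} [NormedAddCommGroup F] [NormedSpace ℝ F]

/-- Iterated directional derivative along a list of directions. -/
noncomputable def dChain (L : List F) (f : F → ℂ) : F → ℂ := L.foldr dirDeriv f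

lemma dChain_cons (v : F) (L : List F) (f : F → ℂ) :
    dChain (v :: L) f = dirDeriv v (dChain L f) := rfl

lemma dChain_append (L₁ L₂ : List F) (f : F → ℂ) :
    dChain (L₁ ++ L₂) f = dChain L₁ (dChain L₂ f) := by
  simp [dChain, List.foldr_append]

lemma dirDeriv_contDiff {m : ℕ} {f : F → ℂ} (hf : ContDiff ℝ (m + 1 : ℕ) f) (v : F) :
    ContDiff ℝ (m : ℕ) (dirDeriv v f) := by
  have h1 : ContDiff ℝ (m : ℕ) (fderiv ℝ f) := hf.fderiv_right (by exact_mod_cast le_refl _)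
  exact (ContinuousLinearMap.apply ℝ ℂ v).contDiff.comp h1

lemma dChain_contDiff {m r : ℕ} {f : F → ℂ} (hf : ContDiff ℝ (m : ℕ) f) (L : List F)
    (hL : L.length + r ≤ m) : ContDiff ℝ (r : ℕ) (dChain L f) := by
  induction L generalizing r with
  | nil => simpa [dChain] using hf.of_le (by exact_mod_cast (by omega : r ≤ m))
  | cons v L ih =>
    have h : ContDiff ℝ (r + 1 : ℕ) (dChain L f) := ih (by simp at hL; omega)
    simpa [dChain_cons] using dirDeriv_contDiff h v

lemma dirDeriv_comm {f : F → ℂ} (hf : ContDiff ℝ (2 : ℕ) f) (v w : F) :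
    dirDeriv v (dirDeriv w f) = dirDeriv w (dirDeriv v f) := by
  funext x
  have hdiff : ∀ y, HasFDerivAt f (fderiv ℝ f y) y := fun y =>
    (hf.differentiable (by norm_num) y).hasFDerivAt
  have h2 : DifferentiableAt ℝ (fderiv ℝ f) x := by
    have : ContDiff ℝ (1 : ℕ) (fderiv ℝ f) := hf.fderiv_right (by norm_num)
    exact (this.differentiable (by norm_num)) x
  have hx : HasFDerivAt (fderiv ℝ f) (fderiv ℝ (fderiv ℝ f) x) x := h2.hasFDerivAt
  have sym := second_derivative_symmetric hdiff hx
  have key : ∀ u z : F, dirDeriv u (dirDeriv z f) x = fderiv ℝ (fderiv ℝ f) x u z := by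
    intro u z
    have hc : HasFDerivAt (fun y => fderiv ℝ f y z)
        ((ContinuousLinearMap.apply ℝ ℂ z).comp (fderiv ℝ (fderiv ℝ f) x)) x :=
      ((ContinuousLinearMap.apply ℝ ℂ z).hasFDerivAt).comp x hx
    show fderiv ℝ (fun y => fderiv ℝ f y z) x u = _
    rw [hc.fderiv]
    rfl
  rw [key v w, key w v, sym v w]

lemma dChain_perm {m : ℕ} {L₁ L₂ : List F} (hp : L₁.Perm L₂) :
    ∀ f : F → ℂ, ContDiff ℝ (m : ℕ) f → L₁.length ≤ m → dChain L₁ f = dChain L₂ f := by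
  induction hp with
  | nil => intro f hf h; rfl
  | cons x h ih =>
    intro f hf hl
    rw [dChain_cons, dChain_cons, ih f hf (by simp at hl; omega)]
  | swap x y L =>
    intro f hf hl
    rw [dChain_cons, dChain_cons, dChain_cons, dChain_cons]
    exact dirDeriv_comm (dChain_contDiff hf L (by simp at hl; omega)) y x
  | trans h₁ h₂ ih₁ ih₂ =>
    intro f hf hl
    rw [ih₁ f hf hl, ih₂ f hf (h₁.length_eq ▸ hl)]

end chain

/-! ### Counting and the canonical chain of a pair of multi-indices -/

lemma count_flatMap_replicate {α ι : Type*} [DecidableEq α] (y : α)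
    (l : List ι) (m : ι → ℕ) (mk : ι → α) :
    List.count y (l.flatMap fun i => List.replicate (m i) (mk i))
      = (l.map fun i => if mk i = y then m i else 0).sum := by
  induction l with
  | nil => rfl
  | cons i l ih =>
    rw [List.flatMap_cons, List.count_append, ih, List.map_cons, List.sum_cons,
      List.count_replicate]
    simp [beq_iff_eq]

section fixn
variable {n : ℕ}

local notation "E" => EuclideanSpace ℝ (Fin n)
local notation "P" => (EuclideanSpace ℝ (Fin n) × EuclideanSpace ℝ (Fin n))

/-- The standard basis directions of `ℝⁿ × ℝⁿ`. -/
noncomputable def emb : (Fin n ⊕ Fin n) → P :=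
  Sum.elim (fun i => ((EuclideanSpace.single i 1 : E), 0))
    (fun i => (0, (EuclideanSpace.single i 1 : E)))

/-- The coordinate functionals of `ℝⁿ × ℝⁿ`. -/
noncomputable def coordL : (Fin n ⊕ Fin n) → (P →L[ℝ] ℝ) :=
  Sum.elim (fun i => (EuclideanSpace.proj i).comp (ContinuousLinearMap.fst ℝ E E))
    (fun i => (EuclideanSpace.proj i).comp (ContinuousLinearMap.snd ℝ E E))

/-- The canonical list of directions realizing `∂_x^γ ∂_ξ^β`. -/
def chainList (γ β : Fin n → ℕ) : List (Fin n ⊕ Fin n) :=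
  ((List.finRange n).flatMap fun i => List.replicate (γ i) (Sum.inl i)) ++
  ((List.finRange n).flatMap fun i => List.replicate (β i) (Sum.inr i))

lemma iterate_dirDeriv (v : P) (m : ℕ) (f : P → ℂ) :
    (dirDeriv v)^[m] f = dChain (List.replicate m v) f := by
  induction m with
  | zero => rfl
  | succ m ih => rw [Function.iterate_succ_apply', ih]; rfl

lemma foldr_flatMap (L : List (Fin n)) (vs : Fin n → P) (m : Fin n → ℕ) (f : P → ℂ) :
    L.foldr (fun i g => (dirDeriv (vs i))^[m i] g) f
      = dChain (L.flatMap fun i => List.replicate (m i) (vs i)) f := by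
  induction L with
  | nil => rfl
  | cons i L ih =>
    rw [List.foldr_cons, ih, List.flatMap_cons, dChain_append, iterate_dirDeriv]

lemma pdXXi_eq_dChain (γ β : Fin n → ℕ) (f : P → ℂ) :
    pdXXi γ β f = dChain ((chainList γ β).map emb) f := by
  unfold pdXXi chainList
  rw [foldr_flatMap, foldr_flatMap, ← dChain_append]
  simp [List.map_append, List.map_flatMap, emb]

lemma length_chainList (γ β : Fin n → ℕ) :
    (chainList γ β).length = (∑ i, γ i) + (∑ i, β i) := by
  simp [chainList, List.length_flatMap, Fin.sum_univ_def, Function.comp_def]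

lemma perm_chainList (L : List (Fin n ⊕ Fin n)) :
    L.Perm (chainList (fun i => @List.count _ instBEqOfDecidableEq (Sum.inl i) L)
      (fun i => @List.count _ instBEqOfDecidableEq (Sum.inr i) L)) := by
  rw [@List.perm_iff_count _ instBEqOfDecidableEq _]
  intro x
  have hcount : ∀ (y : Fin n ⊕ Fin n) (m : Fin n → ℕ) (mk : Fin n → Fin n ⊕ Fin n),
      (@List.count _ instBEqOfDecidableEq y
          ((List.finRange n).flatMap fun i => List.replicate (m i) (mk i)))
        = ∑ i, if mk i = y then m i else 0 := by
    intro y m mk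
    rw [count_flatMap_replicate, Fin.sum_univ_def]
  obtain j | j := x
  · rw [chainList, @List.count_append _ instBEqOfDecidableEq, hcount, hcount]
    simp [Finset.sum_ite_eq' Finset.univ j]
  · rw [chainList, @List.count_append _ instBEqOfDecidableEq, hcount, hcount]
    simp [Finset.sum_ite_eq' Finset.univ j]

/-- Any chain of basis directional derivatives of a sufficiently smooth function is a
mixed partial derivative `pdXXi`. -/
lemma dChain_eq_pdXXi (L : List (Fin n ⊕ Fin n)) {g : P → ℂ} {m : ℕ}
    (hg : ContDiff ℝ (m : ℕ) g) (hL : L.length ≤ m) :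
    dChain (L.map emb) g
      = pdXXi (fun i => @List.count _ instBEqOfDecidableEq (Sum.inl i) L)
          (fun i => @List.count _ instBEqOfDecidableEq (Sum.inr i) L) g := by
  rw [pdXXi_eq_dChain]
  exact dChain_perm ((perm_chainList L).map emb) g hg (by simpa using hL)

lemma sum_counts (L : List (Fin n ⊕ Fin n)) :
    (∑ i, @List.count _ instBEqOfDecidableEq (Sum.inl i) L)
      + (∑ i, @List.count _ instBEqOfDecidableEq (Sum.inr i) L) = L.length := by
  rw [← length_chainList, ((perm_chainList L).length_eq)]

/-! ### Linear algebra on `ℝⁿ × ℝⁿ` -/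

lemma sum_single_smul (x : E) : ∑ i, x i • (EuclideanSpace.single i 1 : E) = x := by
  ext j
  rw [show ((∑ i, x i • (EuclideanSpace.single i 1 : E)) j)
      = ∑ i, (x i • (EuclideanSpace.single i 1 : E)) j from by
    rw [WithLp.ofLp_sum]; exact Finset.sum_apply j Finset.univ _]
  simp [EuclideanSpace.single_apply]

lemma sum_coord_smul (p : P) : ∑ b : Fin n ⊕ Fin n, coordL b p • emb b = p := by
  rw [Fintype.sum_sum_type]
  simp only [coordL, emb, Sum.elim_inl, Sum.elim_inr, ContinuousLinearMap.comp_apply,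
    ContinuousLinearMap.coe_fst', ContinuousLinearMap.coe_snd',
    Prod.smul_mk, smul_zero]
  rw [Prod.ext_iff]
  constructor
  · simp [Prod.fst_sum, sum_single_smul]
  · simp [Prod.snd_sum, sum_single_smul]

lemma abs_coordL_le (b : Fin n ⊕ Fin n) (p : P) : |coordL b p| ≤ ‖p‖ := by
  have key : ∀ (x : E) (i : Fin n), |x i| ≤ ‖x‖ := by
    intro x i
    rw [EuclideanSpace.norm_eq]
    have h1 : |x i| = Real.sqrt (‖x i‖ ^ 2) := by
      rw [Real.sqrt_sq_eq_abs, Real.norm_eq_abs, _root_.abs_abs]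
    rw [h1]
    apply Real.sqrt_le_sqrt
    exact Finset.single_le_sum (f := fun j => ‖x j‖ ^ 2) (fun j _ => by positivity)
      (Finset.mem_univ i)
  obtain i | i := b
  · exact (key p.1 i).trans (norm_fst_le p)
  · exact (key p.2 i).trans (norm_snd_le p)

variable {G : Type*} [NormedAddCommGroup G] [NormedSpace ℝ G]

lemma clm_apply_decomp (T : P →L[ℝ] G) (p : P) :
    T p = ∑ b : Fin n ⊕ Fin n, coordL b p • T (emb b) := by
  conv_lhs => rw [← sum_coord_smul p]
  rw [map_sum]
  simp

lemma clm_decomp (T : P →L[ℝ] G) :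
    T = ∑ b : Fin n ⊕ Fin n, (coordL b).smulRight (T (emb b)) := by
  refine ContinuousLinearMap.ext fun p => ?_
  rw [clm_apply_decomp T p]
  simp [ContinuousLinearMap.sum_apply]

lemma clm_norm_le (T : P →L[ℝ] G) : ‖T‖ ≤ ∑ b : Fin n ⊕ Fin n, ‖T (emb b)‖ := by
  refine T.opNorm_le_bound (Finset.sum_nonneg fun b _ => norm_nonneg _) fun p => ?_
  rw [clm_apply_decomp T p]
  calc ‖∑ b : Fin n ⊕ Fin n, coordL b p • T (emb b)‖
      ≤ ∑ b : Fin n ⊕ Fin n, ‖coordL b p • T (emb b)‖ := norm_sum_le _ _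
    _ ≤ ∑ b : Fin n ⊕ Fin n, ‖T (emb b)‖ * ‖p‖ := by
        refine Finset.sum_le_sum fun b _ => ?_
        rw [norm_smul, Real.norm_eq_abs, mul_comm]
        exact mul_le_mul_of_nonneg_left (abs_coordL_le b p) (norm_nonneg _)
    _ = (∑ b : Fin n ⊕ Fin n, ‖T (emb b)‖) * ‖p‖ := by rw [Finset.sum_mul]

/-! ### Differentiation under the integral sign -/

lemma integrable_decay {c : ℝ} {g : ℝ → ℂ} (hmeas : AEStronglyMeasurable g volume)
    (hg : ∀ η, ‖g η‖ ≤ c * (1 + η ^ 2)⁻¹) : Integrable g := by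
  refine Integrable.mono' (integrable_inv_one_add_sq.const_mul c) hmeas ?_
  exact Filter.Eventually.of_forall hg

theorem main_integral (m : ℕ) (f : P → ℝ → ℂ)
    (h1 : ∀ η, ContDiff ℝ (m : ℕ) fun p => f p η)
    (h2 : ∀ L : List (Fin n ⊕ Fin n), L.length ≤ m →
      Continuous fun q : P × ℝ => dChain (L.map emb) (fun p => f p q.2) q.1)
    (h3 : ∀ L : List (Fin n ⊕ Fin n), L.length ≤ m →
      ∃ c : ℝ, ∀ p η, ‖dChain (L.map emb) (fun p' => f p' η) p‖ ≤ c * (1 + η ^ 2)⁻¹) :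
    ContDiff ℝ (m : ℕ) (fun p => ∫ η : ℝ, f p η) ∧
    ∀ L : List (Fin n ⊕ Fin n), L.length ≤ m → ∀ p,
      dChain (L.map emb) (fun p' => ∫ η : ℝ, f p' η) p
        = ∫ η : ℝ, dChain (L.map emb) (fun p' => f p' η) p := by
  induction m generalizing f with
  | zero =>
    have hcont : Continuous fun p => ∫ η : ℝ, f p η := by
      obtain ⟨c, hc⟩ := h3 [] (le_refl _)
      refine continuous_of_dominated (bound := fun η => c * (1 + η ^ 2)⁻¹)
        (fun p => ?_) (fun p => Filter.Eventually.of_forall fun η => hc p η)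
        (integrable_inv_one_add_sq.const_mul c)
        (Filter.Eventually.of_forall fun η => ?_)
      · exact ((h2 [] le_rfl).comp (Continuous.prodMk_right p)).aestronglyMeasurable
      · exact (h2 [] le_rfl).comp (continuous_id.prodMk continuous_const)
    refine ⟨contDiff_zero.2 hcont, fun L hL p => ?_⟩
    rw [List.length_eq_zero_iff.1 (Nat.le_zero.1 hL)]
    rfl
  | succ m ih =>
    set If : P → ℂ := fun p => ∫ η : ℝ, f p η with hIf
    have hfdiff : ∀ η p, HasFDerivAt (fun p' => f p' η)
        (fderiv ℝ (fun p' => f p' η) p) p := by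
      intro η p
      exact (((h1 η).differentiable (by simp)) p
        ).hasFDerivAt
    have hmeas_one : ∀ p, AEStronglyMeasurable (fun η => fderiv ℝ (fun p' => f p' η) p)
        volume := by
      intro p
      have : (fun η => fderiv ℝ (fun p' => f p' η) p)
          = fun η => ∑ b : Fin n ⊕ Fin n,
              (coordL b).smulRight (dChain ([b].map emb) (fun p' => f p' η) p) := by
        funext η
        exact clm_decomp _
      rw [this]
      refine Continuous.aestronglyMeasurable ?_
      refine continuous_finset_sum _ fun b _ => ?_
      have hb : Continuous fun η => dChain ([b].map emb) (fun p' => f p' η) p :=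
        (h2 [b] (by simp)).comp (Continuous.prodMk_right p)
      exact ((ContinuousLinearMap.smulRightL ℝ _ ℂ (coordL b)).continuous).comp hb
    obtain ⟨cb, hcb⟩ : ∃ cb : (Fin n ⊕ Fin n) → ℝ, ∀ b p η,
        ‖dChain ([b].map emb) (fun p' => f p' η) p‖ ≤ cb b * (1 + η ^ 2)⁻¹ := by
      choose cb hcb using fun b : Fin n ⊕ Fin n => h3 [b] (by simp)
      exact ⟨cb, hcb⟩
    have hbound_one : ∀ p η, ‖fderiv ℝ (fun p' => f p' η) p‖
        ≤ (∑ b : Fin n ⊕ Fin n, cb b) * (1 + η ^ 2)⁻¹ := by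
      intro p η
      refine (clm_norm_le _).trans ?_
      rw [Finset.sum_mul]
      refine Finset.sum_le_sum fun b _ => ?_
      exact hcb b p η
    have hint_one : ∀ p, Integrable (fun η => fderiv ℝ (fun p' => f p' η) p) volume := by
      intro p
      refine Integrable.mono' (g := fun η => (∑ b : Fin n ⊕ Fin n, cb b) * (1 + η ^ 2)⁻¹)
        (integrable_inv_one_add_sq.const_mul _) (hmeas_one p) ?_
      exact Filter.Eventually.of_forall (hbound_one p)
    have key : ∀ p, HasFDerivAt If (∫ η : ℝ, fderiv ℝ (fun p' => f p' η) p) p := by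
      intro p₀
      refine hasFDerivAt_integral_of_dominated_of_fderiv_le
        (F := fun p η => f p η) (F' := fun p η => fderiv ℝ (fun p' => f p' η) p)
        (bound := fun η => (∑ b : Fin n ⊕ Fin n, cb b) * (1 + η ^ 2)⁻¹)
        (s := Set.univ) Filter.univ_mem ?_ ?_ (hmeas_one p₀) ?_ ?_ ?_
      · refine Filter.Eventually.of_forall fun p => ?_
        exact ((h2 [] (by simp)).comp (Continuous.prodMk_right p)).aestronglyMeasurable
      · obtain ⟨c, hc⟩ := h3 [] (by simp)
        exact integrable_decay ((h2 [] (by simp)).comp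
          (Continuous.prodMk_right p₀)).aestronglyMeasurable (hc p₀)
      · exact Filter.Eventually.of_forall fun η p _ => hbound_one p η
      · exact integrable_inv_one_add_sq.const_mul _
      · exact Filter.Eventually.of_forall fun η p _ => hfdiff η p
    have hD : Differentiable ℝ If := fun p => (key p).differentiableAt
    have hcomm1 : ∀ (b : Fin n ⊕ Fin n) p, dirDeriv (emb b) If p
        = ∫ η : ℝ, dirDeriv (emb b) (fun p' => f p' η) p := by
      intro b p
      show fderiv ℝ If p (emb b) = _
      rw [(key p).fderiv, ContinuousLinearMap.integral_apply (hint_one p)]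
      rfl
    have hder : ∀ b : Fin n ⊕ Fin n,
        ContDiff ℝ (m : ℕ) (fun p => ∫ η : ℝ, dirDeriv (emb b) (fun p' => f p' η) p) ∧
        ∀ L : List (Fin n ⊕ Fin n), L.length ≤ m → ∀ p,
          dChain (L.map emb) (fun p' => ∫ η : ℝ, dirDeriv (emb b) (fun p'' => f p'' η) p') p
            = ∫ η : ℝ, dChain (L.map emb)
                (fun p' => dirDeriv (emb b) (fun p'' => f p'' η) p') p := by
      intro b
      have heq : ∀ (L : List (Fin n ⊕ Fin n)) η,
          dChain (L.map emb) (fun p' => dirDeriv (emb b) (fun p'' => f p'' η) p')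
            = dChain ((L ++ [b]).map emb) (fun p'' => f p'' η) := by
        intro L η
        rw [List.map_append, dChain_append]
        rfl
      refine ih (fun p η => dirDeriv (emb b) (fun p' => f p' η) p) ?_ ?_ ?_
      · exact fun η => dirDeriv_contDiff (h1 η) (emb b)
      · intro L hL
        have := h2 (L ++ [b]) (by simp; omega)
        convert this using 2 with q
        rw [heq L q.2]
      · intro L hL
        obtain ⟨c, hc⟩ := h3 (L ++ [b]) (by simp; omega)
        exact ⟨c, fun p η => by rw [heq L η]; exact hc p η⟩
    have hfderivIf : fderiv ℝ If = fun p => ∑ b : Fin n ⊕ Fin n,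
        (coordL b).smulRight ((fun p' => ∫ η : ℝ,
          dirDeriv (emb b) (fun p'' => f p'' η) p') p) := by
      funext p
      rw [(key p).fderiv, clm_decomp (∫ η : ℝ, fderiv ℝ (fun p' => f p' η) p)]
      congr 1
      funext b
      rw [ContinuousLinearMap.integral_apply (hint_one p)]
      rfl
    have hsmooth : ContDiff ℝ (m + 1 : ℕ) If := by
      have hcast : ((m + 1 : ℕ) : WithTop ℕ∞) = (m : WithTop ℕ∞) + 1 := by norm_cast
      rw [hcast, contDiff_succ_iff_fderiv]
      refine ⟨hD, by simp, ?_⟩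
      rw [hfderivIf]
      refine ContDiff.sum fun b _ => ?_
      exact ((ContinuousLinearMap.smulRightL ℝ _ ℂ (coordL b)).contDiff).comp (hder b).1
    refine ⟨hsmooth, fun L hL p => ?_⟩
    rcases List.eq_nil_or_concat L with rfl | ⟨L', b, rfl⟩
    · rfl
    · have hlen : L'.length ≤ m := by simp at hL; omega
      have e1 : dChain ((L' ++ [b]).map emb) If
          = dChain (L'.map emb) (dirDeriv (emb b) If) := by
        rw [List.map_append, dChain_append]
        rfl
      have e2 : dirDeriv (emb b) If
          = fun p' => ∫ η : ℝ, dirDeriv (emb b) (fun p'' => f p'' η) p' := by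
        funext p'
        exact hcomm1 b p'
      rw [List.concat_eq_append, e1, e2, (hder b).2 L' hlen p]
      congr 1
      funext η
      rw [List.map_append, dChain_append]
      rfl

end fixn

/-! ### The basic integral estimate -/

lemma key_estimate {c e : ℝ} (he : e ≤ -1) {s : ℝ} (hs : 1 ≤ s) (hc : 0 ≤ c)
    {g : ℝ → ℂ} (hg : ∀ η : ℝ, ‖g η‖ ≤ c * (s + η ^ 2) ^ e) :
    ‖∫ η : ℝ, g η‖ ≤ (Real.pi * c) * s ^ (e + 1 / 2) := by
  have hs0 : (0 : ℝ) < s := lt_of_lt_of_le one_pos hs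
  set t := Real.sqrt s with ht_def
  have ht0 : 0 < t := Real.sqrt_pos.2 hs0
  have ht2 : t ^ 2 = s := Real.sq_sqrt hs0.le
  have hpt : ∀ η : ℝ, (s + η ^ 2) ^ e ≤ s ^ e * (1 + (η / t) ^ 2)⁻¹ := by
    intro η
    have hb : (1 : ℝ) ≤ 1 + (η / t) ^ 2 := by nlinarith [sq_nonneg (η / t)]
    have h1 : s + η ^ 2 = s * (1 + (η / t) ^ 2) := by
      rw [div_pow, ht2]
      field_simp
    rw [h1, Real.mul_rpow hs0.le (by positivity)]
    refine mul_le_mul_of_nonneg_left ?_ (by positivity)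
    rw [← Real.rpow_neg_one]
    exact Real.rpow_le_rpow_of_exponent_le hb he
  have hbint : Integrable (fun η : ℝ => c * s ^ e * (1 + (η / t) ^ 2)⁻¹) :=
    (integrable_inv_one_add_sq.comp_div ht0.ne').const_mul _
  have h2 : ‖∫ η : ℝ, g η‖ ≤ ∫ η : ℝ, c * s ^ e * (1 + (η / t) ^ 2)⁻¹ := by
    refine norm_integral_le_of_norm_le hbint (Filter.Eventually.of_forall fun η => ?_)
    calc ‖g η‖ ≤ c * (s + η ^ 2) ^ e := hg η
      _ ≤ c * (s ^ e * (1 + (η / t) ^ 2)⁻¹) := mul_le_mul_of_nonneg_left (hpt η) hc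
      _ = c * s ^ e * (1 + (η / t) ^ 2)⁻¹ := by ring
  have h3 : (∫ η : ℝ, c * s ^ e * (1 + (η / t) ^ 2)⁻¹) = c * s ^ e * (t * Real.pi) := by
    rw [MeasureTheory.integral_const_mul]
    rw [MeasureTheory.Measure.integral_comp_div (fun u : ℝ => (1 + u ^ 2)⁻¹) t]
    rw [integral_univ_inv_one_add_sq, abs_of_pos ht0, smul_eq_mul]
  refine h2.trans ?_
  rw [h3]
  have h4 : t = s ^ (1 / 2 : ℝ) := by rw [ht_def]; exact Real.sqrt_eq_rpow s
  rw [h4, show c * s ^ e * (s ^ (1/2 : ℝ) * Real.pi) = Real.pi * c * (s ^ e * s ^ (1/2 : ℝ)) by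
    ring, ← Real.rpow_add hs0]

/-- Integrating a symbol of order `k ≤ −2` over the normal transform
variable `η` yields a symbol of order `k + 1` on the boundary: if
`|∂_x^γ ∂_ξ^β a(x,ξ,η)| ≤ C_{γβ} (1+|ξ|²+η²)^{(k−|β|)/2}` for all `|γ|+|β| ≤ N`, then
`α(x,ξ) = ∫_ℝ a(x,ξ,η) dη` converges absolutely, has continuous partial derivatives of all
orders `≤ N` obtained by differentiating under the integral sign, and
`|∂_x^γ ∂_ξ^β α(x,ξ)| ≤ C'_{γβ} (1+|ξ|²)^{(k+1−|β|)/2}`. -/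
theorem boundary_symbol_of_integrated_symbol (n : ℕ) (hn : 1 ≤ n) (k : ℝ) (hk : k ≤ -2)
    (N : ℕ)
    (a : EuclideanSpace ℝ (Fin n) × EuclideanSpace ℝ (Fin n) × ℝ → ℂ)
    (C : (Fin n → ℕ) → (Fin n → ℕ) → ℝ)
    (ha_cont : Continuous a)
    (ha_smooth : ∀ η : ℝ, ContDiff ℝ N
      (fun p : EuclideanSpace ℝ (Fin n) × EuclideanSpace ℝ (Fin n) => a (p.1, p.2, η)))
    (ha_dcont : ∀ γ β : Fin n → ℕ, (∑ i, γ i) + (∑ i, β i) ≤ N →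
      Continuous (fun q : EuclideanSpace ℝ (Fin n) × EuclideanSpace ℝ (Fin n) × ℝ =>
        pdXXi γ β (fun p => a (p.1, p.2, q.2.2)) (q.1, q.2.1)))
    (ha_bound : ∀ γ β : Fin n → ℕ, (∑ i, γ i) + (∑ i, β i) ≤ N →
      ∀ (x ξ : EuclideanSpace ℝ (Fin n)) (η : ℝ),
        ‖pdXXi γ β (fun p => a (p.1, p.2, η)) (x, ξ)‖ ≤
          C γ β * (1 + ‖ξ‖ ^ 2 + η ^ 2) ^ ((k - ((∑ i, β i : ℕ) : ℝ)) / 2)) :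
    (∀ x ξ : EuclideanSpace ℝ (Fin n), Integrable (fun η : ℝ => a (x, ξ, η))) ∧
    ContDiff ℝ N (fun p : EuclideanSpace ℝ (Fin n) × EuclideanSpace ℝ (Fin n) =>
      ∫ η : ℝ, a (p.1, p.2, η)) ∧
    ∀ γ β : Fin n → ℕ, (∑ i, γ i) + (∑ i, β i) ≤ N →
      (∀ x ξ : EuclideanSpace ℝ (Fin n),
        pdXXi γ β (fun p => ∫ η : ℝ, a (p.1, p.2, η)) (x, ξ)
          = ∫ η : ℝ, pdXXi γ β (fun p => a (p.1, p.2, η)) (x, ξ)) ∧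
      Continuous (pdXXi γ β (fun p => ∫ η : ℝ, a (p.1, p.2, η))) ∧
      ∃ C' : ℝ, ∀ x ξ : EuclideanSpace ℝ (Fin n),
        ‖pdXXi γ β (fun p => ∫ η : ℝ, a (p.1, p.2, η)) (x, ξ)‖ ≤
          C' * (1 + ‖ξ‖ ^ 2) ^ ((k + 1 - ((∑ i, β i : ℕ) : ℝ)) / 2) := by
  classical
  set f : (EuclideanSpace ℝ (Fin n) × EuclideanSpace ℝ (Fin n)) → ℝ → ℂ :=
    fun p η => a (p.1, p.2, η) with hf
  -- nonnegativity of the constants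
  have hC0 : ∀ γ β : Fin n → ℕ, (∑ i, γ i) + (∑ i, β i) ≤ N → 0 ≤ C γ β := by
    intro γ β h
    have hb := ha_bound γ β h 0 0 0
    have h1 : (1 + ‖(0 : EuclideanSpace ℝ (Fin n))‖ ^ 2 + (0 : ℝ) ^ 2 : ℝ) = 1 := by simp
    rw [h1, Real.one_rpow, mul_one] at hb
    exact le_trans (norm_nonneg _) hb
  have hexp : ∀ β : Fin n → ℕ, ((k - ((∑ i, β i : ℕ) : ℝ)) / 2) ≤ -1 := by
    intro β
    have : (0 : ℝ) ≤ ((∑ i, β i : ℕ) : ℝ) := Nat.cast_nonneg _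
    linarith
  have hrp : ∀ (β : Fin n → ℕ) (ξ : EuclideanSpace ℝ (Fin n)) (η : ℝ),
      (1 + ‖ξ‖ ^ 2 + η ^ 2 : ℝ) ^ ((k - ((∑ i, β i : ℕ) : ℝ)) / 2) ≤ (1 + η ^ 2)⁻¹ := by
    intro β ξ η
    have hA : (0 : ℝ) < 1 + η ^ 2 := by positivity
    have hA1 : (1 : ℝ) ≤ 1 + η ^ 2 := by nlinarith [sq_nonneg η]
    have hAB : (1 + η ^ 2 : ℝ) ≤ 1 + ‖ξ‖ ^ 2 + η ^ 2 := by nlinarith [sq_nonneg ‖ξ‖]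
    calc (1 + ‖ξ‖ ^ 2 + η ^ 2 : ℝ) ^ ((k - ((∑ i, β i : ℕ) : ℝ)) / 2)
        ≤ (1 + η ^ 2 : ℝ) ^ ((k - ((∑ i, β i : ℕ) : ℝ)) / 2) :=
          Real.rpow_le_rpow_of_nonpos hA hAB (le_trans (hexp β) (by norm_num))
      _ ≤ (1 + η ^ 2 : ℝ) ^ (-1 : ℝ) := Real.rpow_le_rpow_of_exponent_le hA1 (hexp β)
      _ = (1 + η ^ 2)⁻¹ := Real.rpow_neg_one _
  -- hypotheses of the main differentiation-under-the-integral lemma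
  have hyp2 : ∀ L : List (Fin n ⊕ Fin n), L.length ≤ N →
      Continuous fun q : (EuclideanSpace ℝ (Fin n) × EuclideanSpace ℝ (Fin n)) × ℝ =>
        dChain (L.map emb) (fun p => f p q.2) q.1 := by
    intro L hL
    have hsumL : (∑ i, @List.count _ instBEqOfDecidableEq (Sum.inl i) L)
        + (∑ i, @List.count _ instBEqOfDecidableEq (Sum.inr i) L) ≤ N := by
      rw [sum_counts]; exact hL
    have heq : ∀ η : ℝ, dChain (L.map emb) (fun p => f p η)
        = pdXXi (fun i => @List.count _ instBEqOfDecidableEq (Sum.inl i) L)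
            (fun i => @List.count _ instBEqOfDecidableEq (Sum.inr i) L)
            (fun p => a (p.1, p.2, η)) :=
      fun η => dChain_eq_pdXXi L (ha_smooth η) hL
    have hfun : (fun q : (EuclideanSpace ℝ (Fin n) × EuclideanSpace ℝ (Fin n)) × ℝ =>
        dChain (L.map emb) (fun p => f p q.2) q.1)
        = fun q => pdXXi (fun i => @List.count _ instBEqOfDecidableEq (Sum.inl i) L)
            (fun i => @List.count _ instBEqOfDecidableEq (Sum.inr i) L)
            (fun p => a (p.1, p.2, q.2)) q.1 := by
      funext q
      rw [heq q.2]
    rw [hfun]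
    have hproj : Continuous fun q : (EuclideanSpace ℝ (Fin n) × EuclideanSpace ℝ (Fin n)) × ℝ =>
        (q.1.1, q.1.2, q.2) := by fun_prop
    exact (ha_dcont _ _ hsumL).comp hproj
  have hyp3 : ∀ L : List (Fin n ⊕ Fin n), L.length ≤ N →
      ∃ c : ℝ, ∀ p η, ‖dChain (L.map emb) (fun p' => f p' η) p‖ ≤ c * (1 + η ^ 2)⁻¹ := by
    intro L hL
    have hsumL : (∑ i, @List.count _ instBEqOfDecidableEq (Sum.inl i) L)
        + (∑ i, @List.count _ instBEqOfDecidableEq (Sum.inr i) L) ≤ N := by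
      rw [sum_counts]; exact hL
    have heq : ∀ η : ℝ, dChain (L.map emb) (fun p => f p η)
        = pdXXi (fun i => @List.count _ instBEqOfDecidableEq (Sum.inl i) L)
            (fun i => @List.count _ instBEqOfDecidableEq (Sum.inr i) L)
            (fun p => a (p.1, p.2, η)) :=
      fun η => dChain_eq_pdXXi L (ha_smooth η) hL
    refine ⟨C (fun i => @List.count _ instBEqOfDecidableEq (Sum.inl i) L)
      (fun i => @List.count _ instBEqOfDecidableEq (Sum.inr i) L), fun p η => ?_⟩
    rw [heq η]
    calc ‖pdXXi _ _ (fun p' => a (p'.1, p'.2, η)) p‖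
        ≤ C _ _ * (1 + ‖p.2‖ ^ 2 + η ^ 2) ^ ((k
            - ((∑ i, @List.count _ instBEqOfDecidableEq (Sum.inr i) L : ℕ) : ℝ)) / 2) :=
          ha_bound _ _ hsumL p.1 p.2 η
      _ ≤ C _ _ * (1 + η ^ 2)⁻¹ :=
          mul_le_mul_of_nonneg_left (hrp _ p.2 η) (hC0 _ _ hsumL)
  obtain ⟨hsm, hcm⟩ := main_integral N f (fun η => ha_smooth η) hyp2 hyp3
  refine ⟨?_, hsm, ?_⟩
  · intro x ξ
    obtain ⟨c, hc⟩ := hyp3 [] (Nat.zero_le N)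
    have hmeas : Continuous fun η : ℝ => a (x, ξ, η) :=
      ha_cont.comp (continuous_const.prodMk (continuous_const.prodMk continuous_id))
    exact integrable_decay hmeas.aestronglyMeasurable (fun η => hc (x, ξ) η)
  · intro γ β hsum
    have hlen : (chainList γ β).length ≤ N := by rw [length_chainList]; exact hsum
    have hcomm : ∀ x ξ : EuclideanSpace ℝ (Fin n),
        pdXXi γ β (fun p => ∫ η : ℝ, a (p.1, p.2, η)) (x, ξ)
          = ∫ η : ℝ, pdXXi γ β (fun p => a (p.1, p.2, η)) (x, ξ) := by
      intro x ξ
      rw [pdXXi_eq_dChain]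
      rw [hcm (chainList γ β) hlen (x, ξ)]
      congr 1
      funext η
      rw [← pdXXi_eq_dChain]
    refine ⟨hcomm, ?_, ?_⟩
    · have hfun : pdXXi γ β (fun p => ∫ η : ℝ, a (p.1, p.2, η))
          = fun p => ∫ η : ℝ, pdXXi γ β (fun p' => a (p'.1, p'.2, η)) p := by
        funext p
        exact hcomm p.1 p.2
      rw [hfun]
      refine continuous_of_dominated (bound := fun η => C γ β * (1 + η ^ 2)⁻¹)
        (fun p => ?_) (fun p => Filter.Eventually.of_forall fun η => ?_)
        (integrable_inv_one_add_sq.const_mul _)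
        (Filter.Eventually.of_forall fun η => ?_)
      · have hmap : Continuous fun η : ℝ =>
            ((p.1, p.2, η) : EuclideanSpace ℝ (Fin n) × EuclideanSpace ℝ (Fin n) × ℝ) := by
          fun_prop
        exact ((ha_dcont γ β hsum).comp hmap).aestronglyMeasurable
      · calc ‖pdXXi γ β (fun p' => a (p'.1, p'.2, η)) p‖
            ≤ C γ β * (1 + ‖p.2‖ ^ 2 + η ^ 2) ^ ((k - ((∑ i, β i : ℕ) : ℝ)) / 2) :=
              ha_bound γ β hsum p.1 p.2 η
          _ ≤ C γ β * (1 + η ^ 2)⁻¹ :=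
              mul_le_mul_of_nonneg_left (hrp β p.2 η) (hC0 γ β hsum)
      · have hmap : Continuous fun p : EuclideanSpace ℝ (Fin n) × EuclideanSpace ℝ (Fin n) =>
            ((p.1, p.2, η) : EuclideanSpace ℝ (Fin n) × EuclideanSpace ℝ (Fin n) × ℝ) := by
          fun_prop
        exact (ha_dcont γ β hsum).comp hmap
    · refine ⟨Real.pi * C γ β, fun x ξ => ?_⟩
      rw [hcomm x ξ]
      have hs1 : (1 : ℝ) ≤ 1 + ‖ξ‖ ^ 2 := by nlinarith [sq_nonneg ‖ξ‖]
      have hke := key_estimate (c := C γ β) (e := (k - ((∑ i, β i : ℕ) : ℝ)) / 2)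
        (hexp β) hs1 (hC0 γ β hsum)
        (g := fun η => pdXXi γ β (fun p => a (p.1, p.2, η)) (x, ξ))
        (fun η => ha_bound γ β hsum x ξ η)
      rw [show ((k - ((∑ i, β i : ℕ) : ℝ)) / 2 + 1 / 2)
          = ((k + 1 - ((∑ i, β i : ℕ) : ℝ)) / 2) from by ring] at hke
      exact hke
end

section
/- Let g : ℝ → ℂ be infinitely differentiable, let p ≥ s ≥ 1 be integers, and let φ : ℝ → ℂ be infinitely differentiable with compact support. Then ∫_{-∞}^{0} ρ^p g(ρ) φ^{(s)}(ρ) dρ = (−1)^s ∫_{-∞}^{0} ( (d/dρ)^s ( ρ^p g(ρ) ) ) φ(ρ) dρ, where (d/dρ)^s(ρ^p g) = Σ_{k=0}^{s} binom(s,k) · (p!/(p−k)!) · ρ^{p−k} g^{(s−k)}(ρ). Equivalently: the extension by zero to ρ > 0 of ρ^p g has s-th distributional derivative equal to the extension by zero of (d/dρ)^s(ρ^p g), with no boundary contributions at ρ = 0. (This is the computational core of the paper's lemma that for g ∈ W^s on a half-space, ρ_j^s times the extension of g by zero across the boundary {ρ_j = 0} lies in W^s: the powers of ρ cancel all delta-function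 terms arising from differentiating the extension.) -/
open MeasureTheory Real Complex

private lemma contDiff_iteratedDeriv {f : ℝ → ℂ} (hf : ContDiff ℝ (⊤ : ℕ∞) f) (m : ℕ) :
    ContDiff ℝ (⊤ : ℕ∞) (iteratedDeriv m f) := by
  rw [iteratedDeriv_eq_iterate]
  exact hf.iterate_deriv m

private lemma hasDerivAt_iteratedDeriv {f : ℝ → ℂ} (hf : ContDiff ℝ (⊤ : ℕ∞) f) (m : ℕ)
    (y : ℝ) : HasDerivAt (iteratedDeriv m f) (iteratedDeriv (m + 1) f y) y := by
  have h1 := contDiff_iteratedDeriv hf m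
  have h2 := (h1.differentiable (by simp) y).hasDerivAt
  rwa [iteratedDeriv_succ]

private lemma hasCompactSupport_iteratedDeriv {f : ℝ → ℂ} (hf : HasCompactSupport f) (m : ℕ) :
    HasCompactSupport (iteratedDeriv m f) := by
  induction m with
  | zero => simpa using hf
  | succ n ih => rw [iteratedDeriv_succ]; exact ih.deriv

/-- Leibniz rule for iterated derivatives. -/
private lemma my_iteratedDeriv_mul (f g : ℝ → ℂ) (hf : ContDiff ℝ (⊤ : ℕ∞) f)
    (hg : ContDiff ℝ (⊤ : ℕ∞) g) (n : ℕ) :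
    iteratedDeriv n (fun x => f x * g x)
      = fun x => ∑ k ∈ Finset.range (n + 1),
          (n.choose k : ℂ) * iteratedDeriv k f x * iteratedDeriv (n - k) g x := by
  induction n with
  | zero => simp
  | succ n ih =>
    funext x
    rw [iteratedDeriv_succ, ih]
    have hD : HasDerivAt
        (fun x => ∑ k ∈ Finset.range (n + 1),
          (n.choose k : ℂ) * iteratedDeriv k f x * iteratedDeriv (n - k) g x)
        (∑ k ∈ Finset.range (n + 1),
          (n.choose k : ℂ) * (iteratedDeriv (k + 1) f x * iteratedDeriv (n - k) g x
            + iteratedDeriv k f x * iteratedDeriv (n - k + 1) g x)) x := by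
      refine HasDerivAt.fun_sum fun k _ => ?_
      have := ((hasDerivAt_iteratedDeriv hf k x).mul (hasDerivAt_iteratedDeriv hg (n - k) x))
      simpa [mul_assoc, mul_comm, mul_left_comm] using this.const_mul ((n.choose k : ℂ))
    rw [hD.deriv]
    have key : ∀ k ∈ Finset.range (n + 1), n - k + 1 = n + 1 - k := by
      intro k hk
      have : k ≤ n := Nat.lt_succ_iff.mp (Finset.mem_range.mp hk)
      omega
    -- split the sum
    have hsplit : (∑ k ∈ Finset.range (n + 1),
          (n.choose k : ℂ) * (iteratedDeriv (k + 1) f x * iteratedDeriv (n - k) g x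
            + iteratedDeriv k f x * iteratedDeriv (n - k + 1) g x))
        = (∑ k ∈ Finset.range (n + 1),
            (n.choose k : ℂ) * iteratedDeriv (k + 1) f x * iteratedDeriv (n - k) g x)
          + (∑ k ∈ Finset.range (n + 1),
            (n.choose k : ℂ) * iteratedDeriv k f x * iteratedDeriv (n + 1 - k) g x) := by
      rw [← Finset.sum_add_distrib]
      refine Finset.sum_congr rfl fun k hk => ?_
      rw [← key k hk]; ring
    rw [hsplit]
    -- now the Pascal recombination
    have hS2 : (∑ k ∈ Finset.range (n + 1),
          (n.choose k : ℂ) * iteratedDeriv k f x * iteratedDeriv (n + 1 - k) g x)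
        = (∑ k ∈ Finset.range (n + 2),
          (n.choose k : ℂ) * iteratedDeriv k f x * iteratedDeriv (n + 1 - k) g x) := by
      have h := Finset.sum_range_succ
        (fun k => (n.choose k : ℂ) * iteratedDeriv k f x * iteratedDeriv (n + 1 - k) g x) (n + 1)
      rw [h]
      simp [Nat.choose_succ_self]
    have hT : (∑ k ∈ Finset.range (n + 2),
          ((n + 1).choose k : ℂ) * iteratedDeriv k f x * iteratedDeriv (n + 1 - k) g x)
        = (∑ k ∈ Finset.range (n + 1),
            ((n + 1).choose (k + 1) : ℂ) * iteratedDeriv (k + 1) f x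
              * iteratedDeriv (n - k) g x)
          + (1 : ℂ) * iteratedDeriv 0 f x * iteratedDeriv (n + 1) g x := by
      rw [Finset.sum_range_succ']
      simp
    have hPascal : ∀ k, ((n + 1).choose (k + 1) : ℂ)
        = (n.choose k : ℂ) + (n.choose (k + 1) : ℂ) := by
      intro k
      rw [Nat.choose_succ_succ]
      push_cast
      ring
    rw [hT]
    have hS2' : (∑ k ∈ Finset.range (n + 1),
          (n.choose k : ℂ) * iteratedDeriv k f x * iteratedDeriv (n + 1 - k) g x)
        = (∑ k ∈ Finset.range (n + 1),
            (n.choose (k + 1) : ℂ) * iteratedDeriv (k + 1) f x * iteratedDeriv (n - k) g x)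
          + (n.choose 0 : ℂ) * iteratedDeriv 0 f x * iteratedDeriv (n + 1) g x := by
      rw [hS2, Finset.sum_range_succ']
      simp [Nat.succ_sub_succ]
    rw [hS2']
    simp only [hPascal, Nat.choose_zero_right, Nat.cast_one, one_mul, add_mul]
    rw [Finset.sum_add_distrib]
    ring

private lemma contDiff_ofReal_pow (p : ℕ) :
    ContDiff ℝ (⊤ : ℕ∞) (fun ρ : ℝ => (ρ : ℂ) ^ p) :=
  by
  have h : ContDiff ℝ (⊤ : ℕ∞) (fun ρ : ℝ => (ρ : ℂ)) := Complex.ofRealCLM.contDiff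
  exact h.pow p

private lemma iteratedDeriv_ofReal_pow (p : ℕ) :
    ∀ k, k ≤ p → ∀ x : ℝ, iteratedDeriv k (fun ρ : ℝ => (ρ : ℂ) ^ p) x
      = (p.descFactorial k : ℂ) * (x : ℂ) ^ (p - k) := by
  intro k
  induction k with
  | zero => intro _ x; simp
  | succ k ih =>
    intro hk x
    rw [iteratedDeriv_succ]
    have heq : iteratedDeriv k (fun ρ : ℝ => (ρ : ℂ) ^ p)
        = fun x : ℝ => (p.descFactorial k : ℂ) * (x : ℂ) ^ (p - k) := by
      funext y; exact ih (by omega) y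
    rw [heq]
    have hpow : HasDerivAt (fun x : ℝ => (x : ℂ) ^ (p - k))
        (((p - k : ℕ) : ℂ) * (x : ℂ) ^ (p - k - 1)) x := by
      exact_mod_cast (hasDerivAt_pow (p - k) ((x : ℝ) : ℂ)).comp_ofReal
    have := (hpow.const_mul ((p.descFactorial k : ℂ))).deriv
    rw [this]
    have h1 : p - k - 1 = p - (k + 1) := by omega
    have h2 : (p.descFactorial (k + 1) : ℂ) = (p.descFactorial k : ℂ) * ((p - k : ℕ) : ℂ) := by
      rw [Nat.descFactorial_succ]; push_cast; ring
    rw [h1, h2]; ring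

/-- Integration by parts on `Iic 0`. -/
private lemma ibp_Iic (F φ : ℝ → ℂ) (hF : ContDiff ℝ (⊤ : ℕ∞) F) (hφ : ContDiff ℝ (⊤ : ℕ∞) φ)
    (hφc : HasCompactSupport φ) :
    ∫ ρ in Set.Iic (0 : ℝ), F ρ * deriv φ ρ
      = F 0 * φ 0 - ∫ ρ in Set.Iic (0 : ℝ), deriv F ρ * φ ρ := by
  have hFd : Differentiable ℝ F := hF.differentiable (by simp)
  have hφd : Differentiable ℝ φ := hφ.differentiable (by simp)
  have hprod : ContDiff ℝ 1 (fun ρ => F ρ * φ ρ) := (hF.mul hφ).of_le (by exact_mod_cast le_top : (1 : WithTop ℕ∞) ≤ _)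
  have hprodc : HasCompactSupport (fun ρ => F ρ * φ ρ) := by
    exact (hφc.mul_left : HasCompactSupport (F * φ))
  have hFTC := hprodc.integral_Iic_deriv_eq hprod (0 : ℝ)
  have hderiv : ∀ ρ : ℝ, deriv (fun ρ => F ρ * φ ρ) ρ = deriv F ρ * φ ρ + F ρ * deriv φ ρ := by
    intro ρ; exact deriv_mul (hFd ρ) (hφd ρ)
  rw [funext hderiv] at hFTC
  have hint1 : IntegrableOn (fun ρ => deriv F ρ * φ ρ) (Set.Iic (0 : ℝ)) := by
    have hc : Continuous (fun ρ => deriv F ρ * φ ρ) :=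
      (hF.continuous_deriv (by exact_mod_cast le_top : (1 : WithTop ℕ∞) ≤ _)).mul hφ.continuous
    have hcs : HasCompactSupport (fun ρ => deriv F ρ * φ ρ) :=
      (hφc.mul_left : HasCompactSupport (deriv F * φ))
    exact (hc.integrable_of_hasCompactSupport hcs).integrableOn
  have hint2 : IntegrableOn (fun ρ => F ρ * deriv φ ρ) (Set.Iic (0 : ℝ)) := by
    have hc : Continuous (fun ρ => F ρ * deriv φ ρ) :=
      hF.continuous.mul (hφ.continuous_deriv (by exact_mod_cast le_top : (1 : WithTop ℕ∞) ≤ _))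
    have hcs : HasCompactSupport (fun ρ => F ρ * deriv φ ρ) :=
      (hφc.deriv.mul_left : HasCompactSupport (F * deriv φ))
    exact (hc.integrable_of_hasCompactSupport hcs).integrableOn
  rw [integral_add hint1 hint2] at hFTC
  linear_combination hFTC

/-- Iterated integration by parts on `Iic 0`, assuming derivatives of `F` vanish at `0`. -/
private lemma key_ibp : ∀ (s : ℕ) (F : ℝ → ℂ), ContDiff ℝ (⊤ : ℕ∞) F →
    (∀ j < s, iteratedDeriv j F 0 = 0) →
    ∀ (φ : ℝ → ℂ), ContDiff ℝ (⊤ : ℕ∞) φ → HasCompactSupport φ →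
    ∫ ρ in Set.Iic (0 : ℝ), F ρ * iteratedDeriv s φ ρ
      = (-1 : ℂ) ^ s * ∫ ρ in Set.Iic (0 : ℝ), iteratedDeriv s F ρ * φ ρ := by
  intro s
  induction s with
  | zero => intro F _ _ φ _ _; simp
  | succ s ih =>
    intro F hF h0 φ hφ hφc
    have hψ : ContDiff ℝ (⊤ : ℕ∞) (iteratedDeriv s φ) := contDiff_iteratedDeriv hφ s
    have hψc : HasCompactSupport (iteratedDeriv s φ) := hasCompactSupport_iteratedDeriv hφc s
    have step1 : ∫ ρ in Set.Iic (0 : ℝ), F ρ * iteratedDeriv (s + 1) φ ρ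
        = F 0 * iteratedDeriv s φ 0 - ∫ ρ in Set.Iic (0 : ℝ), deriv F ρ * iteratedDeriv s φ ρ := by
      have := ibp_Iic F (iteratedDeriv s φ) hF hψ hψc
      rw [← this]
      refine setIntegral_congr_fun measurableSet_Iic fun ρ _ => ?_
      rw [iteratedDeriv_succ]
    have hF0 : F 0 = 0 := by
      have := h0 0 (by omega); simpa using this
    have hdF : ContDiff ℝ (⊤ : ℕ∞) (deriv F) := by
      have := contDiff_iteratedDeriv hF 1
      simpa [iteratedDeriv_one] using this
    have hdF0 : ∀ j < s, iteratedDeriv j (deriv F) 0 = 0 := by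
      intro j hj
      have := h0 (j + 1) (by omega)
      rwa [iteratedDeriv_succ'] at this
    have step2 := ih (deriv F) hdF hdF0 φ hφ hφc
    have hrw : iteratedDeriv s (deriv F) = iteratedDeriv (s + 1) F :=
      iteratedDeriv_succ'.symm
    rw [hrw] at step2
    rw [step1, hF0, step2]
    ring

/-- Let `g : ℝ → ℂ` be smooth, `p ≥ s ≥ 1` integers, and `φ : ℝ → ℂ` smooth
with compact support.  Then
`∫_{-∞}^{0} ρ^p g(ρ) φ^{(s)}(ρ) dρ
  = (−1)^s ∫_{-∞}^{0} (∑_{k=0}^{s} C(s,k) (p!/(p−k)!) ρ^{p−k} g^{(s−k)}(ρ)) φ(ρ) dρ`: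
integration by parts on the half-line with no boundary contributions at `ρ = 0`. -/
theorem integral_pow_mul_smooth_iteratedDeriv (g : ℝ → ℂ) (hg : ContDiff ℝ (⊤ : ℕ∞) g)
    (p s : ℕ) (hs : 1 ≤ s) (hsp : s ≤ p)
    (φ : ℝ → ℂ) (hφ : ContDiff ℝ (⊤ : ℕ∞) φ) (hφc : HasCompactSupport φ) :
    ∫ ρ in Set.Iic (0 : ℝ), ((ρ : ℂ) ^ p * g ρ) * iteratedDeriv s φ ρ
      = (-1 : ℂ) ^ s *
        ∫ ρ in Set.Iic (0 : ℝ),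
          (∑ k ∈ Finset.range (s + 1),
            (s.choose k : ℂ) * (p.descFactorial k : ℂ) * (ρ : ℂ) ^ (p - k) *
              iteratedDeriv (s - k) g ρ) * φ ρ := by
  set F : ℝ → ℂ := fun ρ => (ρ : ℂ) ^ p * g ρ with hFdef
  have hF : ContDiff ℝ (⊤ : ℕ∞) F := (contDiff_ofReal_pow p).mul hg
  have hident : ∀ j ≤ p, ∀ x : ℝ, iteratedDeriv j F x
      = ∑ k ∈ Finset.range (j + 1),
          (j.choose k : ℂ) * (p.descFactorial k : ℂ) * (x : ℂ) ^ (p - k) *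
            iteratedDeriv (j - k) g x := by
    intro j hj x
    rw [hFdef]
    rw [my_iteratedDeriv_mul _ _ (contDiff_ofReal_pow p) hg j]
    refine Finset.sum_congr rfl fun k hk => ?_
    have hkp : k ≤ p := le_trans (Nat.lt_succ_iff.mp (Finset.mem_range.mp hk)) hj
    rw [iteratedDeriv_ofReal_pow p k hkp x]
    ring
  have h0 : ∀ j < s, iteratedDeriv j F 0 = 0 := by
    intro j hj
    rw [hident j (by omega)]
    refine Finset.sum_eq_zero fun k hk => ?_
    have hkj : k ≤ j := Nat.lt_succ_iff.mp (Finset.mem_range.mp hk)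
    have : (0 : ℂ) ^ (p - k) = 0 := by
      apply zero_pow; omega
    push_cast
    rw [this]
    ring
  have hmain := key_ibp s F hF h0 φ hφ hφc
  rw [hmain]
  congr 1
  refine setIntegral_congr_fun measurableSet_Iic fun ρ _ => ?_
  rw [hident s hsp ρ]
end
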